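/- arXiv:1206.3817 — 3 statements merged into one kernel-verified Lean document; each statement's English description precedes it below -/
import Mathlib

section
/- Lipschitz continuity of the one-sided Skorokhod reflection map: for continuous ψ₁, ψ₂, r₁, r₂ on [0,T] with reflections φ_k(t) = ψ_k(t) - max(0, sup_{s≤t}(ψ_k(s) - r_k(s))), one has sup_{t≤T} |φ₁(t) - φ₂(t)| ≤ 2 sup_{t≤T} |ψ₁(t) - ψ₂(t)| + 2 sup_{t≤T} |r₁(t) - r₂(t)|. -/
/-!
Perturbing `ψ` and `r` uniformly by at most `a` and `b` moves each value `ψ s - r s` by at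
most `a + b`, hence moves its running supremum, and then the positive part of that supremum, by
at most `a + b`; together with the change of `ψ t` itself this gives `2a + b ≤ 2a + 2b`.
-/

open Set

/-- One-sided Skorokhod reflection of `ψ` below the moving barrier `r`. -/
noncomputable def reflBelow (ψ r : ℝ → ℝ) (t : ℝ) : ℝ :=
  ψ t - max 0 (sSup ((fun s => ψ s - r s) '' Icc 0 t))

section SupremumPerturbation

variable {ι : Type*} {s : Set ι} {f g : ι → ℝ} {c : ℝ}

lemma sSup_image_le_sSup_image_add (hs : s.Nonempty) (hg : BddAbove (g '' s))
    (h : ∀ x ∈ s, f x ≤ g x + c) : sSup (f '' s) ≤ sSup (g '' s) + c :=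
  csSup_le (hs.image f) <| forall_mem_image.2 fun x hx =>
    (h x hx).trans (add_le_add_left (le_csSup hg (mem_image_of_mem g hx)) c)

lemma abs_sSup_image_sub_sSup_image_le (hs : s.Nonempty) (hf : BddAbove (f '' s))
    (hg : BddAbove (g '' s)) (h : ∀ x ∈ s, |f x - g x| ≤ c) :
    |sSup (f '' s) - sSup (g '' s)| ≤ c := by
  rw [abs_sub_le_iff, sub_le_iff_le_add', sub_le_iff_le_add']
  refine ⟨sSup_image_le_sSup_image_add hs hg fun x hx => ?_,
    sSup_image_le_sSup_image_add hs hf fun x hx => ?_⟩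
  · linarith [(abs_le.1 (h x hx)).2]
  · linarith [(abs_le.1 (h x hx)).1]

end SupremumPerturbation

lemma abs_reflBelow_sub_reflBelow_le {ψ₁ ψ₂ r₁ r₂ : ℝ → ℝ} {t a b : ℝ} (ht : 0 ≤ t)
    (h₁ : BddAbove ((fun s => ψ₁ s - r₁ s) '' Icc 0 t))
    (h₂ : BddAbove ((fun s => ψ₂ s - r₂ s) '' Icc 0 t))
    (hψ : ∀ s ∈ Icc 0 t, |ψ₁ s - ψ₂ s| ≤ a) (hr : ∀ s ∈ Icc 0 t, |r₁ s - r₂ s| ≤ b) :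
    |reflBelow ψ₁ r₁ t - reflBelow ψ₂ r₂ t| ≤ 2 * a + b := by
  set S₁ := sSup ((fun s => ψ₁ s - r₁ s) '' Icc 0 t)
  set S₂ := sSup ((fun s => ψ₂ s - r₂ s) '' Icc 0 t)
  have hS : |S₁ - S₂| ≤ a + b :=
    abs_sSup_image_sub_sSup_image_le (nonempty_Icc.2 ht) h₁ h₂ fun s hs =>
      calc |(ψ₁ s - r₁ s) - (ψ₂ s - r₂ s)| = |(ψ₁ s - ψ₂ s) - (r₁ s - r₂ s)| := by ring_nf
        _ ≤ |ψ₁ s - ψ₂ s| + |r₁ s - r₂ s| := abs_sub _ _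
        _ ≤ a + b := add_le_add (hψ s hs) (hr s hs)
  have hmax : |max 0 S₁ - max 0 S₂| ≤ a + b := by
    rw [max_comm 0 S₁, max_comm 0 S₂]
    exact (abs_max_sub_max_le_abs _ _ _).trans hS
  calc |(ψ₁ t - max 0 S₁) - (ψ₂ t - max 0 S₂)|
      = |(ψ₁ t - ψ₂ t) - (max 0 S₁ - max 0 S₂)| := by ring_nf
    _ ≤ |ψ₁ t - ψ₂ t| + |max 0 S₁ - max 0 S₂| := abs_sub _ _
    _ ≤ a + (a + b) := add_le_add (hψ t ⟨ht, le_rfl⟩) hmax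
    _ = 2 * a + b := by ring

lemma le_sSup_image_Icc_of_continuous {f : ℝ → ℝ} (hf : Continuous f) {a b x : ℝ}
    (hx : x ∈ Icc a b) : f x ≤ sSup (f '' Icc a b) :=
  le_csSup (isCompact_Icc.bddAbove_image hf.continuousOn) (mem_image_of_mem f hx)

theorem skorokhod_reflection_lipschitz_general (T : ℝ)
    (ψ₁ ψ₂ r₁ r₂ : ℝ → ℝ)
    (hψ₁ : Continuous ψ₁) (hψ₂ : Continuous ψ₂)
    (hr₁ : Continuous r₁) (hr₂ : Continuous r₂) :
    ∀ t : ℝ, 0 ≤ t → t ≤ T →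
      |reflBelow ψ₁ r₁ t - reflBelow ψ₂ r₂ t| ≤
        2 * sSup ((fun s => |ψ₁ s - ψ₂ s|) '' Icc 0 T) +
        2 * sSup ((fun s => |r₁ s - r₂ s|) '' Icc 0 T) := by
  intro t ht htT
  have hsub : Icc 0 t ⊆ Icc 0 T := Icc_subset_Icc_right htT
  have hψ : ∀ s ∈ Icc 0 T, |ψ₁ s - ψ₂ s| ≤ sSup ((fun s => |ψ₁ s - ψ₂ s|) '' Icc 0 T) :=
    fun _ => le_sSup_image_Icc_of_continuous (hψ₁.sub hψ₂).abs
  have hr : ∀ s ∈ Icc 0 T, |r₁ s - r₂ s| ≤ sSup ((fun s => |r₁ s - r₂ s|) '' Icc 0 T) :=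
    fun _ => le_sSup_image_Icc_of_continuous (hr₁.sub hr₂).abs
  have hr_nonneg : 0 ≤ sSup ((fun s => |r₁ s - r₂ s|) '' Icc 0 T) :=
    (abs_nonneg _).trans (hr 0 ⟨le_rfl, ht.trans htT⟩)
  have hrefl := abs_reflBelow_sub_reflBelow_le ht
    (isCompact_Icc.bddAbove_image (hψ₁.sub hr₁).continuousOn)
    (isCompact_Icc.bddAbove_image (hψ₂.sub hr₂).continuousOn)
    (fun s hs => hψ s (hsub hs)) (fun s hs => hr s (hsub hs))
  linarith

/-- Lipschitz continuity of the one-sided Skorokhod reflection map in both the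
driving path and the barrier, with respect to the uniform norm on `[0,T]`. -/
theorem skorokhod_reflection_lipschitz (T : ℝ) (hT : 0 ≤ T)
    (ψ₁ ψ₂ r₁ r₂ : ℝ → ℝ)
    (hψ₁ : Continuous ψ₁) (hψ₂ : Continuous ψ₂)
    (hr₁ : Continuous r₁) (hr₂ : Continuous r₂) :
    ∀ t : ℝ, 0 ≤ t → t ≤ T →
      |reflBelow ψ₁ r₁ t - reflBelow ψ₂ r₂ t| ≤
        2 * sSup ((fun s => |ψ₁ s - ψ₂ s|) '' Icc 0 T) +
        2 * sSup ((fun s => |r₁ s - r₂ s|) '' Icc 0 T) :=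
  skorokhod_reflection_lipschitz_general T ψ₁ ψ₂ r₁ r₂ hψ₁ hψ₂ hr₁ hr₂
end

section
/- If ψ : [0,∞) → ℝ is continuous, r : [0,∞) → ℝ is continuous, ψ(0) ≤ r(0), and φ is the one-sided reflection of ψ below r (φ(t) = ψ(t) - max(0, sup_{s≤t}(ψ(s)-r(s)))), then at any time t with φ(t) < r(t), φ agrees locally with a vertical translate of ψ: there exists ε > 0 such that φ(u) - φ(t) = ψ(u) - ψ(t) for all u ∈ [t, t+ε). -/
open Set

/-!
With `f := ψ - r`, the reflection is `ψ - max 0 (sup_{[0,t]} f)`. If `φ(t) < r(t)` then `f(t)` lies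
strictly below the level `M := max 0 (sup_{[0,t]} f)`, so by continuity `f < M` on a short interval
after `t`; there the running supremum cannot exceed `M` and cannot drop below it either, so the
correction term is constant and `φ` moves exactly as `ψ`.
-/

section RunningSup

variable {f : ℝ → ℝ} {a t u M : ℝ}

theorem sSup_image_Icc_le_of_forall_Ioc (hf : Continuous f) (hau : a ≤ u)
    (hprefix : sSup (f '' Icc a t) ≤ M) (htail : ∀ s ∈ Ioc t u, f s ≤ M) :
    sSup (f '' Icc a u) ≤ M := by
  refine csSup_le ((nonempty_Icc.2 hau).image f) ?_
  rintro _ ⟨s, ⟨has, hsu⟩, rfl⟩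
  rcases le_or_gt s t with hst | hts
  · exact (le_csSup (isCompact_Icc.bddAbove_image hf.continuousOn)
      (mem_image_of_mem f ⟨has, hst⟩)).trans hprefix
  · exact htail s ⟨hts, hsu⟩

theorem sSup_image_Icc_mono (hf : Continuous f) (hat : a ≤ t) (htu : t ≤ u) :
    sSup (f '' Icc a t) ≤ sSup (f '' Icc a u) :=
  csSup_le_csSup (isCompact_Icc.bddAbove_image hf.continuousOn)
    ((nonempty_Icc.2 hat).image f) (image_mono (Icc_subset_Icc le_rfl htu))

theorem exists_forall_max_sSup_image_Icc_eq (hf : Continuous f) (hat : a ≤ t) (c : ℝ)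
    (hlt : f t < max c (sSup (f '' Icc a t))) :
    ∃ ε > 0, ∀ u, t ≤ u → u < t + ε →
      max c (sSup (f '' Icc a u)) = max c (sSup (f '' Icc a t)) := by
  set M := max c (sSup (f '' Icc a t))
  obtain ⟨ε, hε, hball⟩ :=
    Metric.isOpen_iff.mp (isOpen_lt hf continuous_const) t (show f t < M from hlt)
  refine ⟨ε, hε, fun u htu hu => le_antisymm ?_ ?_⟩
  · refine max_le (le_max_left _ _)
      (sSup_image_Icc_le_of_forall_Ioc hf (hat.trans htu) (le_max_right _ _) fun s hs => ?_)
    have hs_ball : s ∈ Metric.ball t ε := by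
      rw [Metric.mem_ball, Real.dist_eq, abs_lt]
      constructor <;> linarith [hs.1, hs.2]
    exact (hball hs_ball).le
  · exact max_le_max le_rfl (sSup_image_Icc_mono hf hat htu)

end RunningSup

theorem reflection_locally_translate_general (ψ r : ℝ → ℝ)
    (hψ : Continuous ψ) (hr : Continuous r)
    (t : ℝ) (ht : 0 ≤ t) (hlt : reflBelow ψ r t < r t) :
    ∃ ε : ℝ, 0 < ε ∧ ∀ u : ℝ, t ≤ u → u < t + ε →
      reflBelow ψ r u - reflBelow ψ r t = ψ u - ψ t := by
  have hgap : ψ t - r t < max 0 (sSup ((fun s => ψ s - r s) '' Icc 0 t)) := by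
    unfold reflBelow at hlt
    linarith
  obtain ⟨ε, hε, hconst⟩ :=
    exists_forall_max_sSup_image_Icc_eq (f := fun s => ψ s - r s) (hψ.sub hr) ht 0 hgap
  refine ⟨ε, hε, fun u htu hu => ?_⟩
  rw [reflBelow, reflBelow, hconst u htu hu]
  ring

/-- Away from the contact set, the reflected path moves in parallel with the driving
path: if `φ(t) < r(t)` then for a short time after `t` the increments of
`φ := reflBelow ψ r` coincide with those of `ψ`. -/
theorem reflection_locally_translate (ψ r : ℝ → ℝ)
    (hψ : Continuous ψ) (hr : Continuous r) (h0 : ψ 0 ≤ r 0)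
    (t : ℝ) (ht : 0 ≤ t) (hlt : reflBelow ψ r t < r t) :
    ∃ ε : ℝ, 0 < ε ∧ ∀ u : ℝ, t ≤ u → u < t + ε →
      reflBelow ψ r u - reflBelow ψ r t = ψ u - ψ t :=
  reflection_locally_translate_general ψ r hψ hr t ht hlt
end

section
/- Two-sided bound for reflection in a time-dependent interval: Let l ≤ r be continuous real-valued functions on [0,∞) and ψ continuous with ψ(0) ∈ [l(0), r(0)]. If (φ, η) solves the extended Skorokhod problem for ψ in [l(t), r(t)], then for all t, max over s ≤ t of (l(s) - ψ(s)) ≥ η(t) ≥ -max over s ≤ t of (ψ(s) - r(s)) (truncated at 0), i.e. |η(t)| ≤ max(0, sup_{s≤t}(l(s)-ψ(s)), sup_{s≤t}(ψ(s)-r(s))). -/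
/-!
Last-exit argument. If `η t` exceeded `A = max 0 sup_{s ≤ t} (l s - ψ s)`, let `s` be the last time
before `t` with `η s ≤ A`. On `(s, t]` we have `φ = ψ + η > ψ + A ≥ l`, so `φ` stays off the lower
barrier and `η` cannot increase there: `η t ≤ η s ≤ A`, a contradiction. The lower bound is the
mirror image, with `-η` and the upper barrier `r`.
-/

open Set

/-- `(φ, η)` solves the extended Skorokhod problem for the continuous input `ψ` in
the time-dependent interval `[l(t), r(t)]`: `φ = ψ + η ∈ [l, r]` on `[0,∞)`,
`η(0) = 0`, `η` is nondecreasing on intervals where `φ < r` throughout and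
nonincreasing on intervals where `φ > l` throughout. -/
def SolvesESP (l r ψ φ η : ℝ → ℝ) : Prop :=
  Continuous φ ∧ Continuous η ∧ η 0 = 0 ∧
  (∀ t : ℝ, 0 ≤ t → φ t = ψ t + η t ∧ l t ≤ φ t ∧ φ t ≤ r t) ∧
  (∀ s t : ℝ, 0 ≤ s → s ≤ t →
    (∀ u : ℝ, s < u → u ≤ t → φ u < r u) → η s ≤ η t) ∧
  (∀ s t : ℝ, 0 ≤ s → s ≤ t →
    (∀ u : ℝ, s < u → u ≤ t → l u < φ u) → η t ≤ η s)

section LastExit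

variable {α β : Type*} [ConditionallyCompleteLinearOrder α] [TopologicalSpace α] [OrderTopology α]
  [LinearOrder β] [TopologicalSpace β] [OrderClosedTopology β]

theorem ContinuousOn.le_of_no_rise_above {f : α → β} {a t : α} {A : β}
    (hf : ContinuousOn f (Icc a t)) (hat : a ≤ t) (ha : f a ≤ A)
    (hno_rise : ∀ s ∈ Icc a t, (∀ u, s < u → u ≤ t → A < f u) → f t ≤ f s) :
    f t ≤ A := by
  by_contra! hAt
  set S := Icc a t ∩ f ⁻¹' Iic A
  have hS : IsCompact S :=
    isCompact_Icc.of_isClosed_subset (hf.preimage_isClosed_of_isClosed isClosed_Icc isClosed_Iic)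
      inter_subset_left
  obtain ⟨hs_mem, hs_le⟩ : sSup S ∈ S := hS.sSup_mem ⟨a, ⟨le_rfl, hat⟩, ha⟩
  have h_above : ∀ u, sSup S < u → u ≤ t → A < f u := fun u hsu hut =>
    not_le.mp fun hu => (le_csSup hS.bddAbove ⟨⟨hs_mem.1.trans hsu.le, hut⟩, hu⟩).not_gt hsu
  exact hAt.not_ge ((hno_rise _ hs_mem h_above).trans hs_le)

end LastExit

theorem le_max_sSup_image_of_isCompact {X γ : Type*} [TopologicalSpace X]
    [ConditionallyCompleteLinearOrder γ] [TopologicalSpace γ] [ClosedIciTopology γ] {f : X → γ}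
    {K : Set X} {u : X} (hK : IsCompact K) (hf : ContinuousOn f K) (hu : u ∈ K) (c : γ) :
    f u ≤ max c (sSup (f '' K)) :=
  le_max_of_le_right (le_csSup (hK.bddAbove_image hf) (mem_image_of_mem f hu))

namespace SolvesESP

variable {l r ψ φ η : ℝ → ℝ}

theorem le_max_sSup_barrier_sub (hsol : SolvesESP l r ψ φ η) (hl : Continuous l)
    (hψ : Continuous ψ) {t : ℝ} (ht : 0 ≤ t) :
    η t ≤ max 0 (sSup ((fun s => l s - ψ s) '' Icc 0 t)) := by
  obtain ⟨-, hη, hη0, hsys, -, hdown⟩ := hsol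
  refine hη.continuousOn.le_of_no_rise_above ht (by rw [hη0]; exact le_max_left _ _)
    fun s hs h_above => ?_
  refine hdown s t hs.1 hs.2 fun u hsu hut => ?_
  have hu0 : 0 ≤ u := hs.1.trans hsu.le
  have hlψ := le_max_sSup_image_of_isCompact (f := fun s => l s - ψ s) isCompact_Icc
    (hl.sub hψ).continuousOn ⟨hu0, hut⟩ 0
  linarith [(hsys u hu0).1, h_above u hsu hut]

theorem neg_max_sSup_sub_barrier_le (hsol : SolvesESP l r ψ φ η) (hr : Continuous r)
    (hψ : Continuous ψ) {t : ℝ} (ht : 0 ≤ t) :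
    -max 0 (sSup ((fun s => ψ s - r s) '' Icc 0 t)) ≤ η t := by
  obtain ⟨-, hη, hη0, hsys, hup, -⟩ := hsol
  rw [neg_le]
  refine hη.neg.continuousOn.le_of_no_rise_above ht (by simp [hη0]) fun s hs h_above => ?_
  refine neg_le_neg (hup s t hs.1 hs.2 fun u hsu hut => ?_)
  have hu0 : 0 ≤ u := hs.1.trans hsu.le
  have hψr := le_max_sSup_image_of_isCompact (f := fun s => ψ s - r s) isCompact_Icc
    (hψ.sub hr).continuousOn ⟨hu0, hut⟩ 0
  linarith [(hsys u hu0).1, Pi.neg_apply η u ▸ h_above u hsu hut]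

end SolvesESP

theorem esp_correction_bound_general (l r ψ φ η : ℝ → ℝ)
    (hl : Continuous l) (hr : Continuous r) (hψ : Continuous ψ)
    (hsol : SolvesESP l r ψ φ η) :
    ∀ t : ℝ, 0 ≤ t →
      (-(max 0 (sSup ((fun s => ψ s - r s) '' Icc 0 t))) ≤ η t ∧
        η t ≤ max 0 (sSup ((fun s => l s - ψ s) '' Icc 0 t))) ∧
      |η t| ≤ max 0 (max (sSup ((fun s => l s - ψ s) '' Icc 0 t))
        (sSup ((fun s => ψ s - r s) '' Icc 0 t))) := by
  intro t ht
  have hlower := hsol.neg_max_sSup_sub_barrier_le hr hψ ht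
  have hupper := hsol.le_max_sSup_barrier_sub hl hψ ht
  refine ⟨⟨hlower, hupper⟩, abs_le.mpr ⟨?_, ?_⟩⟩
  · exact (neg_le_neg (max_le_max le_rfl (le_max_right _ _))).trans hlower
  · exact hupper.trans (max_le_max le_rfl (le_max_left _ _))

/-- Two-sided bound for the correction term of the reflection in a time-dependent
interval: `-max(0, sup_{s≤t}(ψ(s) - r(s))) ≤ η(t) ≤ max(0, sup_{s≤t}(l(s) - ψ(s)))`,
hence `|η(t)| ≤ max(0, sup_{s≤t}(l(s)-ψ(s)), sup_{s≤t}(ψ(s)-r(s)))`. -/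
theorem esp_correction_bound (l r ψ φ η : ℝ → ℝ)
    (hl : Continuous l) (hr : Continuous r) (hψ : Continuous ψ)
    (hlr : ∀ t : ℝ, 0 ≤ t → l t ≤ r t)
    (h0 : l 0 ≤ ψ 0 ∧ ψ 0 ≤ r 0)
    (hsol : SolvesESP l r ψ φ η) :
    ∀ t : ℝ, 0 ≤ t →
      (-(max 0 (sSup ((fun s => ψ s - r s) '' Icc 0 t))) ≤ η t ∧
        η t ≤ max 0 (sSup ((fun s => l s - ψ s) '' Icc 0 t))) ∧
      |η t| ≤ max 0 (max (sSup ((fun s => l s - ψ s) '' Icc 0 t))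
        (sSup ((fun s => ψ s - r s) '' Icc 0 t))) :=
  esp_correction_bound_general l r ψ φ η hl hr hψ hsol
end
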